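/- arXiv:math-ph/0507047 — 2 statements merged into one kernel-verified Lean document; each statement's English description precedes it below -/
import Mathlib

section
/- Dyson-series composition law: for t₁ ≤ s ≤ t₂, the time-ordered exponential satisfies R(t₂, t₁) = R(t₂, s) · R(s, t₁), where R(b,a) = Σ_j (−1)^j ∫_{a ≤ s_j ≤ ⋯ ≤ s₁ ≤ b} A(s₁)⋯A(s_j) ds. -/
noncomputable section

open intervalIntegral

variable {B : Type*} [NormedRing B] [NormedAlgebra ℝ B] [CompleteSpace B]

/-- The `j`-th iterated Dyson integral: `dyson A t₁ j t` equals the simplex integral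
`∫_{t₁ ≤ s_j ≤ ⋯ ≤ s₁ ≤ t} A(s₁) ⋯ A(s_j) ds`. -/
def dyson (A : ℝ → B) (t₁ : ℝ) : ℕ → ℝ → B
  | 0 => fun _ => 1
  | j + 1 => fun t => ∫ s in t₁..t, A s * dyson A t₁ j s

/-- The time-ordered exponential `R(b, a) = Σ_j (-1)^j ∫_{a≤s_j≤⋯≤s₁≤b} A(s₁)⋯A(s_j) ds`. -/
def timeOrderedExp (A : ℝ → B) (a b : ℝ) : B := ∑' j : ℕ, ((-1 : ℝ) ^ j) • dyson A a j b

/-! Splitting the outer integral of `dyson A a (n + 1) c` at `b` and expanding the inner factor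
by induction gives the finite identity
`dyson A a n c = ∑_{k + l = n} dyson A b k c * dyson A a l b`, for `a, b, c` in any order.
The bound `‖dyson A a n t‖ ≤ ‖1‖ (M |t - a|)ⁿ / n!`, with `M` bounding `‖A‖` between `a` and
`t`, makes both series absolutely convergent, so their Cauchy product is the series of these
finite sums; the signs combine as `(-1)ᵏ (-1)ˡ = (-1)ⁿ`. -/

open Finset
open MeasureTheory (volume)
open scoped Interval

theorem intervalIntegral.integral_mul_const_of_intervalIntegrable {E : Type*}
    [NonUnitalNormedRing E] [NormedSpace ℝ E] [IsScalarTower ℝ E E] [SMulCommClass ℝ E E]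
    {f : ℝ → E} {a b : ℝ}
    (hf : IntervalIntegrable f volume a b) (c : E) :
    ∫ x in a..b, f x * c = (∫ x in a..b, f x) * c := by
  simp only [intervalIntegral, _root_.integral_mul_const_of_integrable hf.1,
    _root_.integral_mul_const_of_integrable hf.2, sub_mul]

section

variable {E : Type*} [NormedRing E] [NormedAlgebra ℝ E] {A : ℝ → E}

theorem continuous_dyson (hA : Continuous A) (a : ℝ) : ∀ n, Continuous (dyson A a n)
  | 0 => continuous_const
  | n + 1 => continuous_primitive
      (fun _ _ => (hA.mul (continuous_dyson hA a n)).intervalIntegrable _ _) a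

theorem dyson_eq_sum_antidiagonal (hA : Continuous A) (a b : ℝ) (n : ℕ) (c : ℝ) :
    dyson A a n c = ∑ p ∈ antidiagonal n, dyson A b p.1 c * dyson A a p.2 b := by
  induction n generalizing c with
  | zero => simp [dyson]
  | succ n ih =>
    have hint : ∀ x y, IntervalIntegrable (fun u => A u * dyson A a n u) volume x y :=
      fun _ _ => (hA.mul (continuous_dyson hA a n)).intervalIntegrable _ _
    have hsplit : dyson A a (n + 1) c
        = dyson A a (n + 1) b + ∫ u in b..c, A u * dyson A a n u :=
      (integral_add_adjacent_intervals (hint a b) (hint b c)).symm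
    have htail : ∫ u in b..c, A u * dyson A a n u
        = ∑ p ∈ antidiagonal n, dyson A b (p.1 + 1) c * dyson A a p.2 b := by
      simp_rw [ih, mul_sum, ← mul_assoc]
      rw [integral_finsetSum]
      · refine sum_congr rfl fun p _ => ?_
        exact integral_mul_const_of_intervalIntegrable
          ((hA.mul (continuous_dyson hA b p.1)).intervalIntegrable _ _) _
      · exact fun p _ =>
          ((hA.mul (continuous_dyson hA b p.1)).mul continuous_const).intervalIntegrable _ _
    rw [hsplit, htail, Nat.sum_antidiagonal_succ, dyson, one_mul]

theorem norm_dyson_le {a t M : ℝ} (hM : ∀ u ∈ Set.uIcc a t, ‖A u‖ ≤ M) (n : ℕ) :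
    ‖dyson A a n t‖ ≤ ‖(1 : E)‖ * ((M * |t - a|) ^ n / n.factorial) := by
  induction n generalizing t with
  | zero => simp [dyson]
  | succ n ih =>
    have hM0 : 0 ≤ M := (norm_nonneg _).trans (hM a Set.left_mem_uIcc)
    have hpoint : ∀ u ∈ Ι a t,
        ‖A u * dyson A a n u‖ ≤ M * (‖(1 : E)‖ * ((M * |u - a|) ^ n / n.factorial)) := by
      intro u hu
      have hsub : Set.uIcc a u ⊆ Set.uIcc a t :=
        Set.uIcc_subset_uIcc_left (Set.uIoc_subset_uIcc hu)
      exact (norm_mul_le _ _).trans (mul_le_mul (hM u (hsub Set.right_mem_uIcc))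
        (ih fun v hv => hM v (hsub hv)) (norm_nonneg _) hM0)
    calc ‖dyson A a (n + 1) t‖ = ‖∫ u in Ι a t, A u * dyson A a n u‖ :=
          norm_integral_eq_norm_integral_uIoc _
      _ ≤ ∫ u in Ι a t, M * (‖(1 : E)‖ * ((M * |u - a|) ^ n / n.factorial)) :=
          MeasureTheory.norm_integral_le_of_norm_le (by fun_prop : Continuous _).integrableOn_uIoc
            ((MeasureTheory.ae_restrict_mem measurableSet_uIoc).mono hpoint)
      _ = ‖(1 : E)‖ * (M ^ (n + 1) / n.factorial) * ∫ u in Ι a t, |u - a| ^ n := by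
          rw [← MeasureTheory.integral_const_mul]
          congr 1 with u
          ring
      _ = ‖(1 : E)‖ * ((M * |t - a|) ^ (n + 1) / (n + 1).factorial) := by
          rw [integral_pow_abs_sub_uIoc, Nat.factorial_succ]
          push_cast
          field_simp
          ring

theorem summable_norm_dyson {a b : ℝ} (hA : ContinuousOn A (Set.uIcc a b)) :
    Summable fun n => ‖dyson A a n b‖ := by
  obtain ⟨M, hM⟩ := isCompact_uIcc.exists_bound_of_continuousOn hA
  exact .of_nonneg_of_le (fun _ => norm_nonneg _) (norm_dyson_le hM)
    ((Real.summable_pow_div_factorial _).mul_left _)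

end

theorem timeOrderedExp_comp_general
    (A : ℝ → B) (hA : Continuous A) (t₁ s t₂ : ℝ) :
    timeOrderedExp A t₁ t₂ = timeOrderedExp A s t₂ * timeOrderedExp A t₁ s := by
  have hsum : ∀ a b, Summable fun n => ‖((-1 : ℝ) ^ n) • dyson A a n b‖ := fun a b => by
    simpa [norm_smul] using summable_norm_dyson (a := a) (b := b) hA.continuousOn
  rw [timeOrderedExp, timeOrderedExp, timeOrderedExp,
    tsum_mul_tsum_eq_tsum_sum_antidiagonal_of_summable_norm (hsum s t₂) (hsum t₁ s)]
  refine tsum_congr fun n => ?_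
  rw [dyson_eq_sum_antidiagonal hA t₁ s n t₂, smul_sum]
  refine sum_congr rfl fun p hp => ?_
  rw [smul_mul_smul_comm, ← pow_add, mem_antidiagonal.mp hp]

/-- Composition law for the time-ordered exponential:
`R(t₂, t₁) = R(t₂, s) · R(s, t₁)` for `t₁ ≤ s ≤ t₂`. -/
theorem timeOrderedExp_comp
    (A : ℝ → B) (hA : Continuous A) (t₁ s t₂ : ℝ) (h₁ : t₁ ≤ s) (h₂ : s ≤ t₂) :
    timeOrderedExp A t₁ t₂ = timeOrderedExp A s t₂ * timeOrderedExp A t₁ s :=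
  timeOrderedExp_comp_general A hA t₁ s t₂
end
end

section
/- Abstract exchange identity (ODE form): Suppose H₀, and families a*(s), H_I(s), H̃_I(s) in a Banach algebra satisfy (i) d/ds e^{a*(s)} = −[H₀, e^{a*(s)}]; (ii) H_I(s) e^{a*(s)} = e^{a*(s)} H̃_I(s) for all s ∈ [0, β]. Let R(β,s) solve ∂_s R(β,s) = R(β,s)(H₀ + H_I(s)), R(β,β)=1, and S(s,0) solve ∂_s S(s,0) = −(H₀ + H̃_I(s)) S(s,0), S(0,0)=1. Then R(β,0) e^{a*(0)} = e^{a*(β)} S(β,0). -/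
noncomputable section

/-- Abstract exchange identity: if `E(s)` (playing the role of `e^{a*(s)}`)
satisfies `E'(s) = -[H₀, E(s)]`, the interaction families intertwine as
`H_I(s) E(s) = E(s) H̃_I(s)`, `R(s)` (playing the role of `R(β, s)`) solves the
backward equation `R'(s) = R(s)(H₀ + H_I(s))` with `R(β) = 1`, and `S(s)`
(playing the role of `S(s, 0)`) solves `S'(s) = -(H₀ + H̃_I(s)) S(s)` with
`S(0) = 1`, then `R(0) E(0) = E(β) S(β)`. -/
theorem abstract_exchange_identity
    {B : Type*} [NormedRing B] [NormedAlgebra ℝ B] [CompleteSpace B]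
    (β : ℝ) (hβ : 0 ≤ β) (H₀ : B) (E HI HItilde R S : ℝ → B)
    (hE : ∀ s ∈ Set.Icc 0 β, HasDerivAt E (-(H₀ * E s - E s * H₀)) s)
    (hInt : ∀ s ∈ Set.Icc 0 β, HI s * E s = E s * HItilde s)
    (hR : ∀ s ∈ Set.Icc 0 β, HasDerivAt R (R s * (H₀ + HI s)) s) (hRβ : R β = 1)
    (hS : ∀ s ∈ Set.Icc 0 β, HasDerivAt S (-((H₀ + HItilde s) * S s)) s) (hS0 : S 0 = 1) :
    R 0 * E 0 = E β * S β := by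
  set W : ℝ → B := fun s => R s * E s * S s with hW
  have hderiv : ∀ s ∈ Set.Icc (0:ℝ) β, HasDerivAt W 0 s := by
    intro s hs
    have h := (((hR s hs).mul (hE s hs)).mul (hS s hs))
    have key : (R s * (H₀ + HI s) * E s + R s * -(H₀ * E s - E s * H₀)) * S s
        + R s * E s * -((H₀ + HItilde s) * S s) = 0 := by
      have hi := hInt s hs
      have expand : (R s * (H₀ + HI s) * E s + R s * -(H₀ * E s - E s * H₀)) * S s
          + R s * E s * -((H₀ + HItilde s) * S s)
          = R s * (HI s * E s) * S s - R s * (E s * HItilde s) * S s := by noncomm_ring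
      rw [expand, hi, sub_self]
    exact key ▸ h
  have hcont : ContinuousOn W (Set.Icc 0 β) := fun s hs =>
    ((hderiv s hs).continuousAt).continuousWithinAt
  have hconst : ∀ s ∈ Set.Icc (0:ℝ) β, W s = W 0 := by
    intro s hs
    exact constant_of_has_deriv_right_zero hcont
      (fun x hx => ((hderiv x (Set.mem_Icc_of_Ico hx)).hasDerivWithinAt)) s hs
  have h0 : W β = W 0 := hconst β ⟨hβ, le_refl β⟩
  simpa [hW, hRβ, hS0] using h0.symm
end
end
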